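/- Fix A > 0 and B > 0 and let Γ^A_B be the collection of convex bodies Ω ⊂ ℝ^{n+1} with 0 ∈ Ω, V(Ω) ≥ B and E(Ω) ≤ A. If Ω_k ∈ Γ^A_B is a sequence converging in the Hausdorff metric to a convex body Ω₀, then lim_{k→∞} E(Ω_k) = E(Ω₀). -/

import Mathlib

/-!
Under Hausdorff convergence support functions converge uniformly on the sphere, once the base
point is moved to a nearby point of the other body. Lower semicontinuity: a near-optimal base
point of `Ω₀` has support function at least `δ > 0` on the sphere, so a close body has a base
point whose support function is at least `e^{-ε}` times it, which costs at most `ε` in the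
average of `log`. Upper semicontinuity: a base point of a close body is compared with a nearby
point of `Ω₀` pulled slightly towards an interior point, where the support function is bounded
below; there the support function of `Ω₀` dominates `e^{-ε}` times that of the close body.
-/

open MeasureTheory Metric Set Filter
open scoped RealInnerProductSpace Topology

noncomputable section

abbrev Eu (n : ℕ) := EuclideanSpace ℝ (Fin (n+1))

/-- Support function of `Ω` with respect to the point `z₀`. -/
def suppFn (n : ℕ) (Ω : Set (Eu n)) (z₀ x : Eu n) : ℝ :=
  sSup ((fun z => ⟪x, z - z₀⟫) '' Ω)

/-- The unit sphere `𝕊ⁿ ⊂ ℝ^{n+1}`. -/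
def sph (n : ℕ) : Set (Eu n) := sphere (0 : Eu n) 1

/-- The surface measure on `ℝ^{n+1}` (n-dimensional Hausdorff measure). -/
def sphMeasure (n : ℕ) : Measure (Eu n) := μH[(n : ℝ)]

/-- `ω_n`, the surface area of `𝕊ⁿ`. -/
def omegaN (n : ℕ) : ℝ := (sphMeasure n (sph n)).toReal

/-- `(1/ω_n) ∫_{𝕊ⁿ} log u_{z₀}`. -/
def entropyIntegral (n : ℕ) (Ω : Set (Eu n)) (z₀ : Eu n) : ℝ :=
  (1 / omegaN n) * ∫ x in sph n, Real.log (suppFn n Ω z₀ x) ∂(sphMeasure n)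

/-- The entropy `E(Ω)`: sup over points with positive support function. -/
def entropy (n : ℕ) (Ω : Set (Eu n)) : ℝ :=
  sSup { r | ∃ z₀ ∈ Ω, (∀ x ∈ sph n, 0 < suppFn n Ω z₀ x) ∧ r = entropyIntegral n Ω z₀ }

/-- The polar dual translated to the origin: `Ω*_{z₀} - z₀`. -/
def polarDual0 (n : ℕ) (Ω : Set (Eu n)) (z₀ : Eu n) : Set (Eu n) :=
  {y | ∀ z ∈ Ω, ⟪y, z - z₀⟫ ≤ 1}

/-- The polar dual of `Ω` with respect to `z₀`. -/
def polarDual (n : ℕ) (Ω : Set (Eu n)) (z₀ : Eu n) : Set (Eu n) :=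
  (fun y => z₀ + y) '' polarDual0 n Ω z₀

/-- A convex body: compact convex with nonempty interior. -/
def IsConvexBody (n : ℕ) (Ω : Set (Eu n)) : Prop :=
  Convex ℝ Ω ∧ IsCompact Ω ∧ (interior Ω).Nonempty

/-- The Santaló point: interior point minimizing the volume of the polar dual. -/
def IsSantaloPoint (n : ℕ) (Ω : Set (Eu n)) (zs : Eu n) : Prop :=
  zs ∈ interior Ω ∧ ∀ z₀ ∈ interior Ω, volume (polarDual n Ω zs) ≤ volume (polarDual n Ω z₀)

/-- The entropy point: a point of `Ω` where the entropy supremum is attained. -/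
def IsEntropyPoint (n : ℕ) (Ω : Set (Eu n)) (ze : Eu n) : Prop :=
  ze ∈ Ω ∧ entropy n Ω = entropyIntegral n Ω ze

/-- The closed unit ball `B(1) ⊂ ℝ^{n+1}`. -/
def unitBall (n : ℕ) : Set (Eu n) := closedBall (0 : Eu n) 1

lemma real_inner_le_norm_of_norm_le_one {E : Type*} [NormedAddCommGroup E]
    [InnerProductSpace ℝ E] {x : E} (hx : ‖x‖ ≤ 1) (v : E) : ⟪x, v⟫ ≤ ‖v‖ :=
  (real_inner_le_norm x v).trans (mul_le_of_le_one_left (norm_nonneg v) hx)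

section SupportFunction

variable {n : ℕ} {Ω Ω' : Set (Eu n)}

lemma le_suppFn (hΩ : IsCompact Ω) {w : Eu n} (hw : w ∈ Ω) (z x : Eu n) :
    ⟪x, w - z⟫ ≤ suppFn n Ω z x :=
  le_csSup (hΩ.image (by fun_prop)).bddAbove (mem_image_of_mem _ hw)

lemma suppFn_le (hne : Ω.Nonempty) {z x : Eu n} {M : ℝ} (h : ∀ w ∈ Ω, ⟪x, w - z⟫ ≤ M) :
    suppFn n Ω z x ≤ M :=
  csSup_le (hne.image _) (forall_mem_image.2 h)

lemma exists_suppFn_eq (hΩ : IsCompact Ω) (hne : Ω.Nonempty) (z x : Eu n) :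
    ∃ w ∈ Ω, ⟪x, w - z⟫ = suppFn n Ω z x :=
  (hΩ.image (by fun_prop)).sSup_mem (hne.image _)

lemma continuous_suppFn (hΩ : IsCompact Ω) (z : Eu n) : Continuous (suppFn n Ω z) :=
  hΩ.continuous_sSup (f := fun x w => ⟪x, w - z⟫) (by fun_prop)

lemma suppFn_eq_sub_inner (hΩ : IsCompact Ω) (hne : Ω.Nonempty) (z x : Eu n) :
    suppFn n Ω z x = suppFn n Ω 0 x - ⟪x, z⟫ := by
  have hsplit : ∀ w, ⟪x, w - z⟫ = ⟪x, w - 0⟫ - ⟪x, z⟫ := fun w => by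
    rw [sub_zero, inner_sub_right]
  refine le_antisymm (suppFn_le hne fun w hw => ?_) ?_
  · rw [hsplit]
    exact sub_le_sub_right (le_suppFn hΩ hw 0 x) _
  · refine sub_le_iff_le_add.2 (suppFn_le hne fun w hw => ?_)
    linarith [hsplit w, le_suppFn hΩ hw z x]

lemma suppFn_smul_add_smul (hΩ : IsCompact Ω) (hne : Ω.Nonempty) {a b : ℝ} (hab : a + b = 1)
    (z z' x : Eu n) :
    suppFn n Ω (a • z + b • z') x = a * suppFn n Ω z x + b * suppFn n Ω z' x := by
  rw [suppFn_eq_sub_inner hΩ hne, suppFn_eq_sub_inner hΩ hne z,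
    suppFn_eq_sub_inner hΩ hne z', inner_add_right, real_inner_smul_right,
    real_inner_smul_right]
  linear_combination -(suppFn n Ω 0 x) * hab

lemma exists_pos_le_suppFn_of_mem_interior (hΩ : IsCompact Ω) {z : Eu n}
    (hz : z ∈ interior Ω) : ∃ r > 0, ∀ x : Eu n, ‖x‖ = 1 → r ≤ suppFn n Ω z x := by
  obtain ⟨r, hr, hball⟩ := Metric.mem_nhds_iff.1 (mem_interior_iff_mem_nhds.1 hz)
  refine ⟨r / 2, half_pos hr, fun x hx => ?_⟩
  have hmem : z + (r / 2) • x ∈ Ω := hball <| by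
    rw [mem_ball, dist_eq_norm, add_sub_cancel_left, norm_smul, hx, mul_one,
      Real.norm_of_nonneg (half_pos hr).le]
    exact half_lt_self hr
  simpa [real_inner_smul_right, real_inner_self_eq_norm_sq, hx] using le_suppFn hΩ hmem z x

lemma exists_suppFn_le_add_of_hausdorffDist_lt (hΩ : IsCompact Ω) (hΩ' : IsCompact Ω')
    (hne' : Ω'.Nonempty) {z : Eu n} (hz : z ∈ Ω) {r : ℝ} (hr : hausdorffDist Ω Ω' < r) :
    ∃ z' ∈ Ω', ∀ x : Eu n, ‖x‖ ≤ 1 → suppFn n Ω z x ≤ suppFn n Ω' z' x + 2 * r := by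
  have hfin : hausdorffEDist Ω Ω' ≠ ⊤ :=
    hausdorffEDist_ne_top_of_nonempty_of_bounded ⟨z, hz⟩ hne' hΩ.isBounded hΩ'.isBounded
  obtain ⟨z', hz', hzz'⟩ := exists_dist_lt_of_hausdorffDist_lt hz hr hfin
  refine ⟨z', hz', fun x hx => ?_⟩
  obtain ⟨w, hw, hwx⟩ := exists_suppFn_eq hΩ ⟨z, hz⟩ z x
  obtain ⟨w', hw', hww'⟩ := exists_dist_lt_of_hausdorffDist_lt hw hr hfin
  have hsplit : ⟪x, w - z⟫ = ⟪x, w' - z'⟫ + ⟪x, w - w'⟫ + ⟪x, z' - z⟫ := by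
    simp only [inner_sub_right]; ring
  rw [dist_eq_norm] at hzz' hww'
  rw [← norm_neg, neg_sub] at hzz'
  rw [← hwx, hsplit]
  linarith [le_suppFn hΩ' hw' z' x, real_inner_le_norm_of_norm_le_one hx (w - w'),
    real_inner_le_norm_of_norm_le_one hx (z' - z)]

end SupportFunction

section LogIntegral

variable {X : Type*} [TopologicalSpace X] [MeasurableSpace X] [OpensMeasurableSpace X]
  {μ : Measure X} {s : Set X}

lemma setIntegral_log_add_log_le (hs : IsCompact s) (hsm : MeasurableSet s) (hμ : μ s ≠ ⊤)
    {f g : X → ℝ} (hf : ContinuousOn f s) (hg : ContinuousOn g s) (hfpos : ∀ x ∈ s, 0 < f x)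
    {c : ℝ} (hc : 0 < c) (hfg : ∀ x ∈ s, c * f x ≤ g x) :
    ∫ x in s, Real.log (f x) ∂μ + μ.real s * Real.log c ≤ ∫ x in s, Real.log (g x) ∂μ := by
  have hgpos : ∀ x ∈ s, 0 < g x := fun x hx => (mul_pos hc (hfpos x hx)).trans_le (hfg x hx)
  have hint : ∀ {h : X → ℝ}, ContinuousOn h s → (∀ x ∈ s, 0 < h x) →
      IntegrableOn (fun x => Real.log (h x)) s μ := fun hh hpos =>
    (hh.log fun x hx => (hpos x hx).ne').integrableOn_of_subset_isCompact hs hsm subset_rfl hμ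
  rw [← smul_eq_mul, ← setIntegral_const, ← integral_add (hint hf hfpos) (integrableOn_const hμ)]
  refine setIntegral_mono_on ((hint hf hfpos).add (integrableOn_const hμ)) (hint hg hgpos) hsm
    fun x hx => ?_
  rw [← Real.log_mul (hfpos x hx).ne' hc.ne', mul_comm]
  exact Real.log_le_log (mul_pos hc (hfpos x hx)) (hfg x hx)

end LogIntegral

section Entropy

variable {n : ℕ} {Ω Ω' : Set (Eu n)}

lemma sphMeasure_sph_ne_top (hω : 0 < omegaN n) : sphMeasure n (sph n) ≠ ⊤ :=
  (ENNReal.toReal_pos_iff.1 hω).2.ne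

lemma average_log_add_log_le (hω : 0 < omegaN n) {f g : Eu n → ℝ} (hf : Continuous f)
    (hg : Continuous g) (hfpos : ∀ x ∈ sph n, 0 < f x) {c : ℝ} (hc : 0 < c)
    (hfg : ∀ x ∈ sph n, c * f x ≤ g x) :
    1 / omegaN n * ∫ x in sph n, Real.log (f x) ∂sphMeasure n + Real.log c
      ≤ 1 / omegaN n * ∫ x in sph n, Real.log (g x) ∂sphMeasure n := by
  have h := setIntegral_log_add_log_le (isCompact_sphere 0 1) isClosed_sphere.measurableSet
    (sphMeasure_sph_ne_top hω) hf.continuousOn hg.continuousOn hfpos hc hfg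
  rw [measureReal_def] at h
  calc _ = 1 / omegaN n * (∫ x in sph n, Real.log (f x) ∂sphMeasure n
        + omegaN n * Real.log c) := by field_simp
    _ ≤ _ := by gcongr; exact h

lemma entropyIntegral_le_log_diam (hω : 0 < omegaN n) (hΩ : IsCompact Ω) {z : Eu n}
    (hz : z ∈ Ω) (hpos : ∀ x ∈ sph n, 0 < suppFn n Ω z x) :
    entropyIntegral n Ω z ≤ Real.log (diam Ω) := by
  have hle : ∀ x ∈ sph n, 1 * suppFn n Ω z x ≤ diam Ω := fun x hx => by
    refine (one_mul _).trans_le (suppFn_le ⟨z, hz⟩ fun w hw => ?_)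
    exact (real_inner_le_norm_of_norm_le_one (mem_sphere_zero_iff_norm.1 hx).le _).trans
      (dist_eq_norm w z ▸ dist_le_diam_of_mem hΩ.isBounded hw hz)
  have h := average_log_add_log_le hω (continuous_suppFn hΩ z) continuous_const hpos one_pos hle
  rw [Real.log_one, add_zero, setIntegral_const, smul_eq_mul, measureReal_def] at h
  change _ ≤ 1 / omegaN n * (omegaN n * _) at h
  rwa [← mul_assoc, one_div_mul_cancel hω.ne', one_mul] at h

lemma entropy_eq_zero_of_omegaN_eq_zero (hω : omegaN n = 0) (Ω : Set (Eu n)) :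
    entropy n Ω = 0 := by
  have h : ∀ r ∈ {r | ∃ z₀ ∈ Ω, (∀ x ∈ sph n, 0 < suppFn n Ω z₀ x)
      ∧ r = entropyIntegral n Ω z₀}, r = 0 := by
    rintro r ⟨z, -, -, rfl⟩
    simp [entropyIntegral, hω]
  exact le_antisymm (Real.sSup_nonpos fun r hr => (h r hr).le)
    (Real.sSup_nonneg fun r hr => (h r hr).ge)

lemma exists_mem_forall_suppFn_pos (hΩ : IsConvexBody n Ω) :
    ∃ z ∈ Ω, ∀ x ∈ sph n, 0 < suppFn n Ω z x := by
  obtain ⟨z, hz⟩ := hΩ.2.2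
  obtain ⟨r, hr, hle⟩ := exists_pos_le_suppFn_of_mem_interior hΩ.2.1 hz
  exact ⟨z, interior_subset hz, fun x hx => hr.trans_le (hle x (mem_sphere_zero_iff_norm.1 hx))⟩

lemma entropyIntegral_le_entropy (hω : 0 < omegaN n) (hΩ : IsCompact Ω) {z : Eu n}
    (hz : z ∈ Ω) (hpos : ∀ x ∈ sph n, 0 < suppFn n Ω z x) :
    entropyIntegral n Ω z ≤ entropy n Ω :=
  le_csSup ⟨Real.log (diam Ω), by
    rintro r ⟨w, hw, hwpos, rfl⟩
    exact entropyIntegral_le_log_diam hω hΩ hw hwpos⟩ ⟨z, hz, hpos, rfl⟩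

lemma entropy_le_of_forall (hΩ : IsConvexBody n Ω) {M : ℝ}
    (h : ∀ z ∈ Ω, (∀ x ∈ sph n, 0 < suppFn n Ω z x) → entropyIntegral n Ω z ≤ M) :
    entropy n Ω ≤ M := by
  obtain ⟨z, hz, hpos⟩ := exists_mem_forall_suppFn_pos hΩ
  refine csSup_le ⟨_, z, hz, hpos, rfl⟩ ?_
  rintro r ⟨w, hw, hwpos, rfl⟩
  exact h w hw hwpos

lemma exists_lt_entropyIntegral (hΩ : IsConvexBody n Ω) {a : ℝ} (ha : a < entropy n Ω) :
    ∃ z ∈ Ω, (∀ x ∈ sph n, 0 < suppFn n Ω z x) ∧ a < entropyIntegral n Ω z := by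
  obtain ⟨z, hz, hpos⟩ := exists_mem_forall_suppFn_pos hΩ
  obtain ⟨r, ⟨w, hw, hwpos, rfl⟩, har⟩ :=
    exists_lt_of_lt_csSup (by exact ⟨_, z, hz, hpos, rfl⟩) ha
  exact ⟨w, hw, hwpos, har⟩

lemma entropyIntegral_add_log_le_entropy (hω : 0 < omegaN n) (hΩ : IsCompact Ω)
    (hΩ' : IsCompact Ω') {z z' : Eu n} (hz' : z' ∈ Ω') {c : ℝ} (hc : 0 < c)
    (hpos : ∀ x ∈ sph n, 0 < suppFn n Ω z x)
    (hle : ∀ x ∈ sph n, c * suppFn n Ω z x ≤ suppFn n Ω' z' x) :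
    entropyIntegral n Ω z + Real.log c ≤ entropy n Ω' :=
  (average_log_add_log_le hω (continuous_suppFn hΩ z) (continuous_suppFn hΩ' z') hpos hc
    hle).trans <| entropyIntegral_le_entropy hω hΩ' hz' fun x hx =>
      (mul_pos hc (hpos x hx)).trans_le (hle x hx)

end Entropy

section Semicontinuity

variable {n : ℕ} {Ω₀ : Set (Eu n)}

theorem exists_sub_lt_entropy_of_hausdorffDist_lt (hω : 0 < omegaN n)
    (hΩ₀ : IsConvexBody n Ω₀) {ε : ℝ} (hε : 0 < ε) :
    ∃ η > 0, ∀ Ω : Set (Eu n), IsCompact Ω → Ω.Nonempty → hausdorffDist Ω Ω₀ < η →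
      entropy n Ω₀ - ε < entropy n Ω := by
  obtain ⟨z₀, hz₀, hpos₀, hlt⟩ := exists_lt_entropyIntegral hΩ₀ (sub_lt_self _ (half_pos hε))
  obtain ⟨y, hy, hmin⟩ := (isCompact_sphere (0 : Eu n) 1).exists_isMinOn
    (NormedSpace.sphere_nonempty.2 zero_le_one) (continuous_suppFn hΩ₀.2.1 z₀).continuousOn
  set δ := suppFn n Ω₀ z₀ y
  set c := Real.exp (-(ε / 2))
  have hc : c < 1 := Real.exp_lt_one_iff.2 (by linarith)
  refine ⟨(1 - c) * δ / 2, by have := hpos₀ y hy; positivity, fun Ω hΩ hne hd => ?_⟩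
  rw [hausdorffDist_comm] at hd
  obtain ⟨z, hz, hzle⟩ := exists_suppFn_le_add_of_hausdorffDist_lt hΩ₀.2.1 hΩ hne hz₀ hd
  have hle : ∀ x ∈ sph n, c * suppFn n Ω₀ z₀ x ≤ suppFn n Ω z x := fun x hx => by
    have hδ : (1 - c) * δ ≤ (1 - c) * suppFn n Ω₀ z₀ x :=
      mul_le_mul_of_nonneg_left (hmin hx) (by linarith)
    linarith [hzle x (mem_sphere_zero_iff_norm.1 hx).le]
  have h := entropyIntegral_add_log_le_entropy hω hΩ₀.2.1 hΩ hz (Real.exp_pos _) hpos₀ hle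
  rw [Real.log_exp] at h
  linarith

theorem exists_entropy_le_add_of_hausdorffDist_lt (hω : 0 < omegaN n)
    (hΩ₀ : IsConvexBody n Ω₀) {ε : ℝ} (hε : 0 < ε) :
    ∃ η > 0, ∀ Ω : Set (Eu n), IsConvexBody n Ω → hausdorffDist Ω Ω₀ < η →
      entropy n Ω ≤ entropy n Ω₀ + ε := by
  obtain ⟨p, hp⟩ := hΩ₀.2.2
  have hne₀ : Ω₀.Nonempty := ⟨p, interior_subset hp⟩
  obtain ⟨ρ, hρ, hρle⟩ := exists_pos_le_suppFn_of_mem_interior hΩ₀.2.1 hp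
  set c := Real.exp (-ε)
  have hc : c < 1 := Real.exp_lt_one_iff.2 (by linarith)
  refine ⟨(1 - c) * ρ / 2, by positivity, fun Ω hΩ hd =>
    entropy_le_of_forall hΩ fun z hz hpos => ?_⟩
  obtain ⟨z', hz', hzle⟩ := exists_suppFn_le_add_of_hausdorffDist_lt hΩ.2.1 hΩ₀.2.1 hne₀ hz hd
  -- Pulling `z'` towards the interior point `p` makes room for the error `(1 - c) * ρ`.
  have hw : c • z' + (1 - c) • p ∈ Ω₀ :=
    hΩ₀.1 hz' (interior_subset hp) (Real.exp_pos _).le (by linarith) (add_sub_cancel c 1)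
  have hle : ∀ x ∈ sph n, c * suppFn n Ω z x ≤ suppFn n Ω₀ (c • z' + (1 - c) • p) x :=
    fun x hx => by
      have hx1 := mem_sphere_zero_iff_norm.1 hx
      rw [suppFn_smul_add_smul hΩ₀.2.1 hne₀ (add_sub_cancel c 1)]
      have h₁ : c * suppFn n Ω z x ≤ c * (suppFn n Ω₀ z' x + (1 - c) * ρ) := by
        have := hzle x hx1.le
        gcongr
        linarith
      have h₂ : c * ((1 - c) * ρ) ≤ (1 - c) * ρ :=
        mul_le_of_le_one_left (mul_nonneg (by linarith) hρ.le) hc.le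
      have h₃ : (1 - c) * ρ ≤ (1 - c) * suppFn n Ω₀ p x :=
        mul_le_mul_of_nonneg_left (hρle x hx1) (by linarith)
      linarith
  have h := entropyIntegral_add_log_le_entropy hω hΩ.2.1 hΩ₀.2.1 hw (Real.exp_pos _) hpos hle
  rw [Real.log_exp] at h
  linarith

end Semicontinuity

theorem entropy_continuous_along_hausdorff_general (n : ℕ) (Ωseq : ℕ → Set (Eu n)) (Ω₀ : Set (Eu n))
    (hbody : ∀ k, IsConvexBody n (Ωseq k)) (hbody0 : IsConvexBody n Ω₀)
    (hconv : Tendsto (fun k => Metric.hausdorffDist (Ωseq k) Ω₀) atTop (𝓝 0)) :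
    Tendsto (fun k => entropy n (Ωseq k)) atTop (𝓝 (entropy n Ω₀)) := by
  rcases (ENNReal.toReal_nonneg : 0 ≤ omegaN n).eq_or_lt with hω | hω
  · simp only [entropy_eq_zero_of_omegaN_eq_zero hω.symm]
    exact tendsto_const_nhds
  refine tendsto_order.2 ⟨fun a ha => ?_, fun a ha => ?_⟩
  · obtain ⟨η, hη, h⟩ := exists_sub_lt_entropy_of_hausdorffDist_lt hω hbody0 (sub_pos.2 ha)
    filter_upwards [hconv.eventually (gt_mem_nhds hη)] with k hk
    have := h (Ωseq k) (hbody k).2.1 ((hbody k).2.2.mono interior_subset) hk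
    linarith
  · obtain ⟨η, hη, h⟩ :=
      exists_entropy_le_add_of_hausdorffDist_lt hω hbody0 (half_pos (sub_pos.2 ha))
    filter_upwards [hconv.eventually (gt_mem_nhds hη)] with k hk
    have := h (Ωseq k) (hbody k) hk
    linarith

theorem entropy_continuous_along_hausdorff (n : ℕ) (hn : 1 ≤ n) (A B : ℝ)
    (hA : 0 < A) (hB : 0 < B) (Ωseq : ℕ → Set (Eu n)) (Ω₀ : Set (Eu n))
    (hbody : ∀ k, IsConvexBody n (Ωseq k)) (h0 : ∀ k, (0 : Eu n) ∈ Ωseq k)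
    (hVol : ∀ k, B ≤ (volume (Ωseq k)).toReal) (hEnt : ∀ k, entropy n (Ωseq k) ≤ A)
    (hbody0 : IsConvexBody n Ω₀)
    (hconv : Tendsto (fun k => Metric.hausdorffDist (Ωseq k) Ω₀) atTop (𝓝 0)) :
    Tendsto (fun k => entropy n (Ωseq k)) atTop (𝓝 (entropy n Ω₀)) :=
  entropy_continuous_along_hausdorff_general n Ωseq Ω₀ hbody hbody0 hconv
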